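/- arXiv:2603.06067 — 12 statements merged into one kernel-verified Lean document; each statement's English description precedes it below -/
import Mathlib

section
/- Anonymity (A1) for aggregative semantics: let A = (𝒜, ℛ, 𝒮, w) and A' = (𝒜', ℛ', 𝒮', w') be acyclic QBAFs and f : 𝒜 → 𝒜' a bijection such that for all a, b ∈ 𝒜: w'(f(a)) = w(a), (b,a) ∈ ℛ ⟺ (f(b), f(a)) ∈ ℛ', and (b,a) ∈ 𝒮 ⟺ (f(b), f(a)) ∈ 𝒮'. If Deg satisfies the aggregative recurrence for (φ_R, φ_S, φ_f) on A and Deg' satisfies the aggregative recurrence for the same (φ_R, φ_S, φ_f) on A', then Deg(a) = Deg'(f(a)) for every a ∈ 𝒜. -/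
open scoped Classical

/-- The finset of parents of `a` for a relation `Rel` (`b` is a parent of `a`
when `Rel b a` holds, i.e. `(b, a)` is in the relation). -/
noncomputable def parentSet {α : Type*} [Fintype α] (Rel : α → α → Prop) (a : α) :
    Finset α :=
  Finset.univ.filter (fun b => Rel b a)

/-- The multiset of `Deg`-values of the parents of `a`. -/
noncomputable def parentVals {α : Type*} [Fintype α] (Rel : α → α → Prop)
    (Deg : α → ℝ) (a : α) : Multiset ℝ :=
  (parentSet Rel a).val.map Deg

/-- `Deg` satisfies the aggregative recurrence for `(φR, φS, φf)` on the QBAF with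
attack relation `R`, support relation `S` and weight function `w`. -/
def AggRec {α : Type*} [Fintype α] (R S : α → α → Prop) (w : α → ℝ)
    (φR φS : Multiset ℝ → ℝ) (φf : ℝ → ℝ → ℝ → ℝ) (Deg : α → ℝ) : Prop :=
  ∀ a : α, Deg a = φf (φR (parentVals R Deg a)) (φS (parentVals S Deg a)) (w a)

/-- Anonymity (A1) for aggregative semantics. -/
theorem statement1 {α α' : Type*} [Fintype α] [Fintype α']
    (R S : α → α → Prop) (w : α → ℝ)
    (R' S' : α' → α' → Prop) (w' : α' → ℝ)
    (hRS : ∀ a b : α, ¬ (R a b ∧ S a b))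
    (hRS' : ∀ a b : α', ¬ (R' a b ∧ S' a b))
    (hw : ∀ a : α, w a ∈ Set.Icc (0 : ℝ) 1)
    (hw' : ∀ a : α', w' a ∈ Set.Icc (0 : ℝ) 1)
    (hacyclic : WellFounded (fun b a : α => R b a ∨ S b a))
    (hacyclic' : WellFounded (fun b a : α' => R' b a ∨ S' b a))
    (f : α → α') (hf : Function.Bijective f)
    (hfw : ∀ a : α, w' (f a) = w a)
    (hfR : ∀ a b : α, R b a ↔ R' (f b) (f a))
    (hfS : ∀ a b : α, S b a ↔ S' (f b) (f a))
    (φR φS : Multiset ℝ → ℝ) (φf : ℝ → ℝ → ℝ → ℝ)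
    (Deg : α → ℝ) (Deg' : α' → ℝ)
    (hDeg : AggRec R S w φR φS φf Deg)
    (hDeg' : AggRec R' S' w' φR φS φf Deg') :
    ∀ a : α, Deg a = Deg' (f a) := by
  intro a
  induction a using hacyclic.induction with
  | _ a ih =>
    have key : ∀ (T : α → α → Prop) (T' : α' → α' → Prop),
        (∀ a b : α, T b a ↔ T' (f b) (f a)) →
        (∀ b, T b a ∨ S b a → T b a → True) →
        parentVals T' Deg' (f a) = ((parentSet T a).val.map fun b => Deg' (f b)) := by
      intro T T' hT _
      have himg : parentSet T' (f a) = (parentSet T a).image f := by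
        ext b'
        obtain ⟨b, rfl⟩ := hf.2 b'
        simp [parentSet, ← hT, hf.1.eq_iff]
      rw [parentVals, himg, Finset.image_val,
        Multiset.Nodup.dedup ((parentSet T a).nodup.map hf.1),
        Multiset.map_map]
      rfl
    have hR2 := key R R' hfR (fun _ _ _ => trivial)
    have hS2 := key S S' hfS (fun _ _ _ => trivial)
    have hmR : ((parentSet R a).val.map fun b => Deg' (f b)) = parentVals R Deg a := by
      unfold parentVals
      refine Multiset.map_congr rfl ?_
      intro b hb
      exact (ih b (Or.inl (by simpa [parentSet] using hb))).symm
    have hmS : ((parentSet S a).val.map fun b => Deg' (f b)) = parentVals S Deg a := by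
      unfold parentVals
      refine Multiset.map_congr rfl ?_
      intro b hb
      exact (ih b (Or.inr (by simpa [parentSet] using hb))).symm
    rw [hDeg a, hDeg' (f a), hR2, hS2, hmR, hmS, hfw]
end

section
/- Independence (A2) for aggregative semantics: let A = (𝒜, ℛ, 𝒮, w) and A' = (𝒜', ℛ', 𝒮', w') be acyclic QBAFs on disjoint argument sets, and let A ⊕ A' be the QBAF on the disjoint union 𝒜 ⊔ 𝒜' whose attack relation is ℛ ∪ ℛ', whose support relation is 𝒮 ∪ 𝒮', and whose weight function restricts to w on 𝒜 and to w' on 𝒜'. If Deg satisfies the aggregative recurrence for (φ_R, φ_S, φ_f) on A and Deg'' satisfies the aggregative recurrence for the same (φ_R, φ_S, φ_f) on A ⊕ A', then Deg(a) = Deg''(a) for every a ∈ 𝒜. -/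
open scoped Classical

/-- The attack/support relation on the disjoint union of two QBAFs. -/
def sumRel {α β : Type*} (R : α → α → Prop) (R' : β → β → Prop) :
    α ⊕ β → α ⊕ β → Prop
  | Sum.inl b, Sum.inl a => R b a
  | Sum.inr b, Sum.inr a => R' b a
  | _, _ => False

/-
Restricted to the left summand, a solution of the recurrence on `A ⊕ A'` is again a solution on
`A`, because no edge of `A ⊕ A'` joins the two summands, so every argument of `A` has the same
attackers and supporters in both frameworks. On an acyclic QBAF the recurrence has at most one
solution, by well-founded induction along the parent relation.
-/

lemma parentSet_sumRel_inl {α β : Type*} [Fintype α] [Fintype β]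
    (T : α → α → Prop) (T' : β → β → Prop) (a : α) :
    parentSet (sumRel T T') (Sum.inl a) = (parentSet T a).map Function.Embedding.inl := by
  ext (b | b) <;> simp [parentSet, sumRel.eq_def]

lemma parentVals_sumRel_inl {α β : Type*} [Fintype α] [Fintype β]
    (T : α → α → Prop) (T' : β → β → Prop) (D : α ⊕ β → ℝ) (a : α) :
    parentVals (sumRel T T') D (Sum.inl a) = parentVals T (D ∘ Sum.inl) a := by
  simp only [parentVals, parentSet_sumRel_inl, Finset.map_val, Multiset.map_map]
  rfl

lemma parentVals_congr {α : Type*} [Fintype α] {T : α → α → Prop} {D₁ D₂ : α → ℝ} {a : α}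
    (h : ∀ b, T b a → D₁ b = D₂ b) : parentVals T D₁ a = parentVals T D₂ a :=
  Multiset.map_congr rfl fun b hb => h b (by simpa [parentSet] using hb)

namespace AggRec

variable {α : Type*} [Fintype α] {R S : α → α → Prop} {w : α → ℝ}
  {φR φS : Multiset ℝ → ℝ} {φf : ℝ → ℝ → ℝ → ℝ}

lemma comp_inl {β : Type*} [Fintype β] {R' S' : β → β → Prop} {w' : β → ℝ} {D : α ⊕ β → ℝ}
    (hD : AggRec (sumRel R R') (sumRel S S') (Sum.elim w w') φR φS φf D) :
    AggRec R S w φR φS φf (D ∘ Sum.inl) := fun a => by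
  simpa only [parentVals_sumRel_inl, Function.comp_apply, Sum.elim_inl] using hD (Sum.inl a)

lemma eq_of_wellFounded (hwf : WellFounded fun b a : α => R b a ∨ S b a) {D₁ D₂ : α → ℝ}
    (h₁ : AggRec R S w φR φS φf D₁) (h₂ : AggRec R S w φR φS φf D₂) : D₁ = D₂ := by
  funext a
  induction a using hwf.induction with
  | _ a ih =>
    rw [h₁ a, h₂ a, parentVals_congr fun b hb => ih b (Or.inl hb),
      parentVals_congr fun b hb => ih b (Or.inr hb)]

end AggRec

theorem statement2_general {α α' : Type*} [Fintype α] [Fintype α']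
    (R S : α → α → Prop) (w : α → ℝ)
    (R' S' : α' → α' → Prop) (w' : α' → ℝ)
    (hacyclic : WellFounded (fun b a : α => R b a ∨ S b a))
    (φR φS : Multiset ℝ → ℝ) (φf : ℝ → ℝ → ℝ → ℝ)
    (Deg : α → ℝ) (Deg'' : α ⊕ α' → ℝ)
    (hDeg : AggRec R S w φR φS φf Deg)
    (hDeg'' : AggRec (sumRel R R') (sumRel S S') (Sum.elim w w') φR φS φf Deg'') :
    ∀ a : α, Deg a = Deg'' (Sum.inl a) :=
  congrFun (AggRec.eq_of_wellFounded hacyclic hDeg hDeg''.comp_inl)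

/-- Independence (A2) for aggregative semantics. -/
theorem statement2 {α α' : Type*} [Fintype α] [Fintype α']
    (R S : α → α → Prop) (w : α → ℝ)
    (R' S' : α' → α' → Prop) (w' : α' → ℝ)
    (hRS : ∀ a b : α, ¬ (R a b ∧ S a b))
    (hRS' : ∀ a b : α', ¬ (R' a b ∧ S' a b))
    (hw : ∀ a : α, w a ∈ Set.Icc (0 : ℝ) 1)
    (hw' : ∀ a : α', w' a ∈ Set.Icc (0 : ℝ) 1)
    (hacyclic : WellFounded (fun b a : α => R b a ∨ S b a))
    (hacyclic' : WellFounded (fun b a : α' => R' b a ∨ S' b a))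
    (φR φS : Multiset ℝ → ℝ) (φf : ℝ → ℝ → ℝ → ℝ)
    (Deg : α → ℝ) (Deg'' : α ⊕ α' → ℝ)
    (hDeg : AggRec R S w φR φS φf Deg)
    (hDeg'' : AggRec (sumRel R R') (sumRel S S') (Sum.elim w w') φR φS φf Deg'') :
    ∀ a : α, Deg a = Deg'' (Sum.inl a) :=
  statement2_general R S w R' S' w' hacyclic φR φS φf Deg Deg'' hDeg hDeg''
end

section
/- Directionality (A3) for aggregative semantics: let A = (𝒜, ℛ, 𝒮, w) and A' = (𝒜, ℛ', 𝒮', w) be QBAFs on the same arguments with the same weights, with ℛ ⊆ ℛ', 𝒮 ⊆ 𝒮', and ℛ' ∪ 𝒮' = ℛ ∪ 𝒮 ∪ {(a,b)} for some arguments a, b. Assume A' is acyclic and let x be an argument such that there is no directed path from b to x in the graph with edge set ℛ' ∪ 𝒮'. If Deg satisfies the aggregative recurrence for (φ_R, φ_S, φ_f) on A and Deg' satisfies the aggregative recurrence for the same (φ_R, φ_S, φ_f) on A', then Deg(x) = Deg'(x). -/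
open scoped Classical

/-- Directionality (A3) for aggregative semantics. -/
theorem statement3 {α : Type*} [Fintype α]
    (R S R' S' : α → α → Prop) (w : α → ℝ)
    (hRS : ∀ u v : α, ¬ (R u v ∧ S u v))
    (hRS' : ∀ u v : α, ¬ (R' u v ∧ S' u v))
    (hw : ∀ u : α, w u ∈ Set.Icc (0 : ℝ) 1)
    (hRsub : ∀ u v : α, R u v → R' u v)
    (hSsub : ∀ u v : α, S u v → S' u v)
    (a b : α)
    (hunion : ∀ u v : α, (R' u v ∨ S' u v) ↔ (R u v ∨ S u v ∨ (u = a ∧ v = b)))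
    (hacyclic' : WellFounded (fun u v : α => R' u v ∨ S' u v))
    (x : α)
    (hnopath : ¬ Relation.ReflTransGen (fun u v : α => R' u v ∨ S' u v) b x)
    (φR φS : Multiset ℝ → ℝ) (φf : ℝ → ℝ → ℝ → ℝ)
    (Deg Deg' : α → ℝ)
    (hDeg : AggRec R S w φR φS φf Deg)
    (hDeg' : AggRec R' S' w φR φS φf Deg') :
    Deg x = Deg' x := by
  set r : α → α → Prop := fun u v : α => R' u v ∨ S' u v with hr
  -- R and R' agree on edges into a vertex v ≠ b, likewise S and S'.
  have hRiff : ∀ u v : α, v ≠ b → (R u v ↔ R' u v) := by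
    intro u v hv
    constructor
    · exact hRsub u v
    · intro h
      rcases (hunion u v).1 (Or.inl h) with h1 | h2 | h3
      · exact h1
      · exact absurd ⟨h, hSsub u v h2⟩ (hRS' u v)
      · exact absurd h3.2 hv
  have hSiff : ∀ u v : α, v ≠ b → (S u v ↔ S' u v) := by
    intro u v hv
    constructor
    · exact hSsub u v
    · intro h
      rcases (hunion u v).1 (Or.inr h) with h1 | h2 | h3
      · exact absurd ⟨hRsub u v h1, h⟩ (hRS' u v)
      · exact h2
      · exact absurd h3.2 hv
  -- main induction
  have main : ∀ y : α, ¬ Relation.ReflTransGen r b y → Deg y = Deg' y := by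
    intro y
    induction y using hacyclic'.induction with
    | _ y ih =>
      intro hy
      have hyb : y ≠ b := fun h => hy (h ▸ Relation.ReflTransGen.refl)
      have hpar : ∀ u : α, r u y → Deg u = Deg' u := by
        intro u hu
        refine ih u hu ?_
        intro hbu
        exact hy (hbu.tail hu)
      have hRset : parentSet R y = parentSet R' y := by
        ext u
        simp only [parentSet, Finset.mem_filter, Finset.mem_univ, true_and]
        exact hRiff u y hyb
      have hSset : parentSet S y = parentSet S' y := by
        ext u
        simp only [parentSet, Finset.mem_filter, Finset.mem_univ, true_and]
        exact hSiff u y hyb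
      have hRvals : parentVals R Deg y = parentVals R' Deg' y := by
        rw [parentVals, parentVals, hRset]
        refine Multiset.map_congr rfl ?_
        intro u hu
        have : R' u y := by
          simpa [parentSet] using hu
        exact hpar u (Or.inl this)
      have hSvals : parentVals S Deg y = parentVals S' Deg' y := by
        rw [parentVals, parentVals, hSset]
        refine Multiset.map_congr rfl ?_
        intro u hu
        have : S' u y := by
          simpa [parentSet] using hu
        exact hpar u (Or.inr this)
      rw [hDeg y, hDeg' y, hRvals, hSvals]
  exact main x hnopath
end

section
/- Neutrality (A6) for aggregative semantics: let (𝒜, ℛ, 𝒮, w) be a QBAF and Deg a function satisfying the aggregative recurrence for (φ_R, φ_S, φ_f). Assume 0 is a neutral element of φ_R and of φ_S, i.e. φ_R(M + ⟦0⟧) = φ_R(M) and φ_S(M + ⟦0⟧) = φ_S(M) for every finite multiset M of reals. Let a, b, x ∈ 𝒜 be arguments such that w(a) = w(b), Deg(x) = 0, Att(a) ⊆ Att(b), Supp(a) ⊆ Supp(b), and Att(b) ∪ Supp(b) = Att(a) ∪ Supp(a) ∪ {x}. Then Deg(a) = Deg(b). -/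
open scoped Classical

/-! If `x` has degree `0`, the parents of `b` are those of `a` with at most `x` added, on one
side or the other (never both, as attacks and supports are disjoint), and a neutral `0`
leaves both aggregates unchanged. -/

theorem apply_map_eq_of_subset_of_subset_insert {ι M β : Type*} [DecidableEq ι] [Zero M]
    (φ : Multiset M → β) (hφ : ∀ m : Multiset M, φ (0 ::ₘ m) = φ m) (f : ι → M) {x : ι}
    (hx : f x = 0) {P Q : Finset ι} (hPQ : P ⊆ Q) (hQP : Q ⊆ insert x P) :
    φ (Q.val.map f) = φ (P.val.map f) := by
  by_cases hxP : x ∈ P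
  · rw [Finset.insert_eq_of_mem hxP] at hQP
    rw [hQP.antisymm hPQ]
  by_cases hxQ : x ∈ Q
  · rw [hQP.antisymm (Finset.insert_subset hxQ hPQ), Finset.insert_val_of_notMem hxP,
      Multiset.map_cons, hx, hφ]
  · rw [((Finset.subset_insert_iff_of_notMem hxQ).1 hQP).antisymm hPQ]

theorem Finset.subset_insert_of_union_eq_union_insert {ι : Type*} [DecidableEq ι]
    {A S A' S' : Finset ι} {x : ι} (hS : S ⊆ S') (hdisj : Disjoint A' S')
    (hU : A' ∪ S' = A ∪ S ∪ {x}) : A' ⊆ insert x A := by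
  intro y hy
  have hy' : y ∈ A ∪ S ∪ {x} := hU ▸ Finset.mem_union_left S' hy
  rcases Finset.mem_union.1 hy' with hy' | hyx
  · rcases Finset.mem_union.1 hy' with hyA | hyS
    · exact Finset.mem_insert_of_mem hyA
    · exact absurd (hS hyS) (Finset.disjoint_left.1 hdisj hy)
  · rw [Finset.mem_singleton.1 hyx]
    exact Finset.mem_insert_self x A

theorem disjoint_parentSet {α : Type*} [Fintype α] {R S : α → α → Prop}
    (hRS : ∀ u v : α, ¬ (R u v ∧ S u v)) (b : α) :
    Disjoint (parentSet R b) (parentSet S b) :=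
  Finset.disjoint_filter.2 fun y _ hR hS => hRS y b ⟨hR, hS⟩

theorem statement6_general {α : Type*} [Fintype α]
    (R S : α → α → Prop) (w : α → ℝ)
    (hRS : ∀ u v : α, ¬ (R u v ∧ S u v))
    (φR φS : Multiset ℝ → ℝ) (φf : ℝ → ℝ → ℝ → ℝ)
    (hneutR : ∀ M : Multiset ℝ, φR (0 ::ₘ M) = φR M)
    (hneutS : ∀ M : Multiset ℝ, φS (0 ::ₘ M) = φS M)
    (Deg : α → ℝ)
    (hDeg : AggRec R S w φR φS φf Deg)
    (a b x : α)
    (hwab : w a = w b)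
    (hx : Deg x = 0)
    (hAtt : parentSet R a ⊆ parentSet R b)
    (hSupp : parentSet S a ⊆ parentSet S b)
    (hU : parentSet R b ∪ parentSet S b = parentSet R a ∪ parentSet S a ∪ {x}) :
    Deg a = Deg b := by
  have hdisj := disjoint_parentSet hRS b
  have hAtt' : parentSet R b ⊆ insert x (parentSet R a) :=
    Finset.subset_insert_of_union_eq_union_insert hSupp hdisj hU
  have hSupp' : parentSet S b ⊆ insert x (parentSet S a) :=
    Finset.subset_insert_of_union_eq_union_insert hAtt hdisj.symm <| by
      rw [Finset.union_comm, hU, Finset.union_comm (parentSet R a)]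
  rw [hDeg a, hDeg b, hwab, parentVals, parentVals, parentVals, parentVals,
    apply_map_eq_of_subset_of_subset_insert φR hneutR Deg hx hAtt hAtt',
    apply_map_eq_of_subset_of_subset_insert φS hneutS Deg hx hSupp hSupp']

/-- Neutrality (A6) for aggregative semantics. -/
theorem statement6 {α : Type*} [Fintype α]
    (R S : α → α → Prop) (w : α → ℝ)
    (hRS : ∀ u v : α, ¬ (R u v ∧ S u v))
    (hw : ∀ u : α, w u ∈ Set.Icc (0 : ℝ) 1)
    (φR φS : Multiset ℝ → ℝ) (φf : ℝ → ℝ → ℝ → ℝ)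
    (hneutR : ∀ M : Multiset ℝ, φR (0 ::ₘ M) = φR M)
    (hneutS : ∀ M : Multiset ℝ, φS (0 ::ₘ M) = φS M)
    (Deg : α → ℝ)
    (hDeg : AggRec R S w φR φS φf Deg)
    (a b x : α)
    (hwab : w a = w b)
    (hx : Deg x = 0)
    (hAtt : parentSet R a ⊆ parentSet R b)
    (hSupp : parentSet S a ⊆ parentSet S b)
    (hU : parentSet R b ∪ parentSet S b = parentSet R a ∪ parentSet S a ∪ {x}) :
    Deg a = Deg b :=
  statement6_general R S w hRS φR φS φf hneutR hneutS Deg hDeg a b x hwab hx hAtt hSupp hU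
end

section
/- Monotony (A7) for aggregative semantics: let (𝒜, ℛ, 𝒮, w) be a QBAF and Deg a function with values in [0,1] satisfying the aggregative recurrence for (φ_R, φ_S, φ_f). Assume: 0 is a neutral element of φ_R and of φ_S (φ(M + ⟦0⟧) = φ(M) for every finite multiset M); φ_R and φ_S are nondecreasing, i.e. for every multiset M and reals u ≤ v, φ(M + ⟦u⟧) ≤ φ(M + ⟦v⟧); and φ_f is nonincreasing in its first argument and nondecreasing in its second argument. Then for all arguments a, b with w(a) = w(b), Att(a) ⊆ Att(b) and Supp(b) ⊆ Supp(a), one has Deg(a) ≥ Deg(b). -/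
open scoped Classical

lemma aux_add {φ : Multiset ℝ → ℝ}
    (hneut : ∀ M : Multiset ℝ, φ (0 ::ₘ M) = φ M)
    (hmon : ∀ (M : Multiset ℝ) (u v : ℝ), u ≤ v → φ (u ::ₘ M) ≤ φ (v ::ₘ M))
    (M E : Multiset ℝ) (hE : ∀ x ∈ E, (0:ℝ) ≤ x) : φ M ≤ φ (M + E) := by
  induction E using Multiset.induction with
  | empty => simp
  | cons x E ih =>
    have hx : (0:ℝ) ≤ x := hE x (Multiset.mem_cons_self x E)
    have ih' := ih (fun y hy => hE y (Multiset.mem_cons_of_mem hy))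
    calc φ M ≤ φ (M + E) := ih'
      _ = φ (0 ::ₘ (M + E)) := (hneut _).symm
      _ ≤ φ (x ::ₘ (M + E)) := hmon _ 0 x hx
      _ = φ (M + x ::ₘ E) := by rw [Multiset.add_cons]

/-- Monotony (A7) for aggregative semantics. -/
theorem statement7 {α : Type*} [Fintype α]
    (R S : α → α → Prop) (w : α → ℝ)
    (hRS : ∀ u v : α, ¬ (R u v ∧ S u v))
    (hw : ∀ u : α, w u ∈ Set.Icc (0 : ℝ) 1)
    (φR φS : Multiset ℝ → ℝ) (φf : ℝ → ℝ → ℝ → ℝ)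
    (Deg : α → ℝ)
    (hDegI : ∀ u : α, Deg u ∈ Set.Icc (0 : ℝ) 1)
    (hDeg : AggRec R S w φR φS φf Deg)
    (hneutR : ∀ M : Multiset ℝ, φR (0 ::ₘ M) = φR M)
    (hneutS : ∀ M : Multiset ℝ, φS (0 ::ₘ M) = φS M)
    (hmonR : ∀ (M : Multiset ℝ) (u v : ℝ), u ≤ v → φR (u ::ₘ M) ≤ φR (v ::ₘ M))
    (hmonS : ∀ (M : Multiset ℝ) (u v : ℝ), u ≤ v → φS (u ::ₘ M) ≤ φS (v ::ₘ M))
    (hf1 : ∀ x x' y z : ℝ, x ≤ x' → φf x' y z ≤ φf x y z)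
    (hf2 : ∀ x y y' z : ℝ, y ≤ y' → φf x y z ≤ φf x y' z) :
    ∀ a b : α, w a = w b → parentSet R a ⊆ parentSet R b →
      parentSet S b ⊆ parentSet S a → Deg b ≤ Deg a := by
  intro a b hwab hRab hSba
  have hvalR : parentVals R Deg a ≤ parentVals R Deg b :=
    Multiset.map_le_map (Finset.val_le_iff.mpr hRab)
  have hvalS : parentVals S Deg b ≤ parentVals S Deg a :=
    Multiset.map_le_map (Finset.val_le_iff.mpr hSba)
  obtain ⟨ER, hER⟩ := Multiset.le_iff_exists_add.mp hvalR
  obtain ⟨ES, hES⟩ := Multiset.le_iff_exists_add.mp hvalS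
  have hERpos : ∀ x ∈ ER, (0:ℝ) ≤ x := by
    intro x hx
    have : x ∈ parentVals R Deg b := by rw [hER]; exact Multiset.mem_add.mpr (Or.inr hx)
    obtain ⟨u, _, rfl⟩ := Multiset.mem_map.mp this
    exact (hDegI u).1
  have hESpos : ∀ x ∈ ES, (0:ℝ) ≤ x := by
    intro x hx
    have : x ∈ parentVals S Deg a := by rw [hES]; exact Multiset.mem_add.mpr (Or.inr hx)
    obtain ⟨u, _, rfl⟩ := Multiset.mem_map.mp this
    exact (hDegI u).1
  have h1 : φR (parentVals R Deg a) ≤ φR (parentVals R Deg b) := by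
    rw [hER]; exact aux_add hneutR hmonR _ _ hERpos
  have h2 : φS (parentVals S Deg b) ≤ φS (parentVals S Deg a) := by
    rw [hES]; exact aux_add hneutS hmonS _ _ hESpos
  calc Deg b = φf (φR (parentVals R Deg b)) (φS (parentVals S Deg b)) (w b) := hDeg b
    _ ≤ φf (φR (parentVals R Deg a)) (φS (parentVals S Deg b)) (w b) := hf1 _ _ _ _ h1
    _ ≤ φf (φR (parentVals R Deg a)) (φS (parentVals S Deg a)) (w b) := hf2 _ _ _ _ h2
    _ = Deg a := by rw [← hwab]; exact (hDeg a).symm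
end

section
/- Strict monotony for aggregative semantics: let (𝒜, ℛ, 𝒮, w) be a QBAF and Deg a function with values in [0,1] satisfying the aggregative recurrence for (φ_R, φ_S, φ_f). Assume: 0 is a neutral element of φ_R and of φ_S (φ(M + ⟦0⟧) = φ(M) for every finite multiset M); φ_R and φ_S are strictly increasing, i.e. for every multiset M and reals u < v, φ(M + ⟦u⟧) < φ(M + ⟦v⟧); and φ_f is strictly decreasing in its first argument and strictly increasing in its second argument. Let a, b be arguments with w(a) = w(b), Att(a) ⊆ Att(b) and Supp(b) ⊆ Supp(a), such that either there exists x ∈ Att(b) \ Att(a) with Deg(x) > 0 or there exists y ∈ Supp(a) \ Supp(b) with Deg(y) > 0. Then Deg(a) > Deg(b). -/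
open scoped Classical

lemma aux_le (φ : Multiset ℝ → ℝ)
    (hneut : ∀ M : Multiset ℝ, φ (0 ::ₘ M) = φ M)
    (hmon : ∀ (M : Multiset ℝ) (u v : ℝ), u < v → φ (u ::ₘ M) < φ (v ::ₘ M))
    (N M : Multiset ℝ) (hN : ∀ u ∈ N, (0:ℝ) ≤ u) :
    φ M ≤ φ (N + M) := by
  induction N using Multiset.induction with
  | empty => simp
  | cons u N ih =>
    have h1 : φ M ≤ φ (N + M) := ih (fun v hv => hN v (Multiset.mem_cons_of_mem hv))
    have hu := hN u (Multiset.mem_cons_self u N)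
    rcases eq_or_lt_of_le hu with h | h
    · calc φ M ≤ φ (N + M) := h1
        _ = φ (u ::ₘ (N + M)) := by rw [← h, hneut]
        _ = φ ((u ::ₘ N) + M) := by rw [Multiset.cons_add]
    · have h2 := hmon (N + M) 0 u h
      rw [hneut] at h2
      exact le_of_lt <| calc φ M ≤ φ (N + M) := h1
        _ < φ (u ::ₘ (N + M)) := h2
        _ = φ ((u ::ₘ N) + M) := by rw [Multiset.cons_add]

lemma aux_lt (φ : Multiset ℝ → ℝ)
    (hneut : ∀ M : Multiset ℝ, φ (0 ::ₘ M) = φ M)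
    (hmon : ∀ (M : Multiset ℝ) (u v : ℝ), u < v → φ (u ::ₘ M) < φ (v ::ₘ M))
    (N M : Multiset ℝ) (hN : ∀ u ∈ N, (0:ℝ) ≤ u)
    (hex : ∃ u ∈ N, (0:ℝ) < u) :
    φ M < φ (N + M) := by
  obtain ⟨u, hu, hupos⟩ := hex
  obtain ⟨N', rfl⟩ : ∃ N', N = u ::ₘ N' := ⟨N.erase u, (Multiset.cons_erase hu).symm⟩
  have h1 : φ M ≤ φ (N' + M) :=
    aux_le φ hneut hmon N' M (fun v hv => hN v (Multiset.mem_cons_of_mem hv))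
  have h2 := hmon (N' + M) 0 u hupos
  rw [hneut] at h2
  calc φ M ≤ φ (N' + M) := h1
    _ < φ (u ::ₘ (N' + M)) := h2
    _ = φ ((u ::ₘ N') + M) := by rw [Multiset.cons_add]

lemma vals_le {α : Type*} [Fintype α] (φ : Multiset ℝ → ℝ)
    (hneut : ∀ M : Multiset ℝ, φ (0 ::ₘ M) = φ M)
    (hmon : ∀ (M : Multiset ℝ) (u v : ℝ), u < v → φ (u ::ₘ M) < φ (v ::ₘ M))
    (Deg : α → ℝ) (hpos : ∀ u : α, (0:ℝ) ≤ Deg u)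
    (s t : Finset α) (hst : s ⊆ t) :
    φ (s.val.map Deg) ≤ φ (t.val.map Deg) := by
  have hle : s.val ≤ t.val := Finset.val_le_iff.mpr hst
  have heq : t.val.map Deg = (t.val - s.val).map Deg + s.val.map Deg := by
    rw [← Multiset.map_add, tsub_add_cancel_of_le hle]
  rw [heq]
  exact aux_le φ hneut hmon _ _ (by
    intro u hu
    obtain ⟨x, _, rfl⟩ := Multiset.mem_map.mp hu
    exact hpos x)

lemma vals_lt {α : Type*} [Fintype α] (φ : Multiset ℝ → ℝ)
    (hneut : ∀ M : Multiset ℝ, φ (0 ::ₘ M) = φ M)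
    (hmon : ∀ (M : Multiset ℝ) (u v : ℝ), u < v → φ (u ::ₘ M) < φ (v ::ₘ M))
    (Deg : α → ℝ) (hpos : ∀ u : α, (0:ℝ) ≤ Deg u)
    (s t : Finset α) (hst : s ⊆ t)
    (x : α) (hxt : x ∈ t) (hxs : x ∉ s) (hx : 0 < Deg x) :
    φ (s.val.map Deg) < φ (t.val.map Deg) := by
  have hle : s.val ≤ t.val := Finset.val_le_iff.mpr hst
  have heq : t.val.map Deg = (t.val - s.val).map Deg + s.val.map Deg := by
    rw [← Multiset.map_add, tsub_add_cancel_of_le hle]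
  rw [heq]
  have hxd : x ∈ t.val - s.val := by
    rw [← Multiset.count_pos, Multiset.count_sub]
    have h1 : Multiset.count x t.val = 1 := Multiset.count_eq_one_of_mem t.nodup hxt
    have h2 : Multiset.count x s.val = 0 := Multiset.count_eq_zero_of_notMem hxs
    omega
  refine aux_lt φ hneut hmon _ _ ?_ ⟨Deg x, Multiset.mem_map_of_mem Deg hxd, hx⟩
  intro u hu
  obtain ⟨y, _, rfl⟩ := Multiset.mem_map.mp hu
  exact hpos y

/-- Strict monotony for aggregative semantics. -/
theorem statement8 {α : Type*} [Fintype α]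
    (R S : α → α → Prop) (w : α → ℝ)
    (hRS : ∀ u v : α, ¬ (R u v ∧ S u v))
    (hw : ∀ u : α, w u ∈ Set.Icc (0 : ℝ) 1)
    (φR φS : Multiset ℝ → ℝ) (φf : ℝ → ℝ → ℝ → ℝ)
    (Deg : α → ℝ)
    (hDegI : ∀ u : α, Deg u ∈ Set.Icc (0 : ℝ) 1)
    (hDeg : AggRec R S w φR φS φf Deg)
    (hneutR : ∀ M : Multiset ℝ, φR (0 ::ₘ M) = φR M)
    (hneutS : ∀ M : Multiset ℝ, φS (0 ::ₘ M) = φS M)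
    (hmonR : ∀ (M : Multiset ℝ) (u v : ℝ), u < v → φR (u ::ₘ M) < φR (v ::ₘ M))
    (hmonS : ∀ (M : Multiset ℝ) (u v : ℝ), u < v → φS (u ::ₘ M) < φS (v ::ₘ M))
    (hf1 : ∀ x x' y z : ℝ, x < x' → φf x' y z < φf x y z)
    (hf2 : ∀ x y y' z : ℝ, y < y' → φf x y z < φf x y' z)
    (a b : α)
    (hwab : w a = w b)
    (hAtt : parentSet R a ⊆ parentSet R b)
    (hSupp : parentSet S b ⊆ parentSet S a)
    (hstrict : (∃ x ∈ parentSet R b, x ∉ parentSet R a ∧ 0 < Deg x) ∨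
      (∃ y ∈ parentSet S a, y ∉ parentSet S b ∧ 0 < Deg y)) :
    Deg b < Deg a := by
  
  have hpos : ∀ u : α, (0:ℝ) ≤ Deg u := fun u => (hDegI u).1
  have hxle : φR (parentVals R Deg a) ≤ φR (parentVals R Deg b) :=
    vals_le φR hneutR hmonR Deg hpos _ _ hAtt
  have hyle : φS (parentVals S Deg b) ≤ φS (parentVals S Deg a) :=
    vals_le φS hneutS hmonS Deg hpos _ _ hSupp
  have hda := hDeg a
  have hdb := hDeg b
  rw [hda, hdb, ← hwab]
  have key : ∀ x x' y y' : ℝ, x ≤ x' → y' ≤ y → (x < x' ∨ y' < y) →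
      φf x' y' (w a) < φf x y (w a) := by
    intro x x' y y' hx hy hor
    rcases hor with h | h
    · calc φf x' y' (w a) < φf x y' (w a) := hf1 x x' y' (w a) h
        _ ≤ φf x y (w a) := by
          rcases eq_or_lt_of_le hy with he | hl
          · rw [he]
          · exact le_of_lt (hf2 x y' y (w a) hl)
    · calc φf x' y' (w a) < φf x' y (w a) := hf2 x' y' y (w a) h
        _ ≤ φf x y (w a) := by
          rcases eq_or_lt_of_le hx with he | hl
          · rw [he]
          · exact le_of_lt (hf1 x x' y (w a) hl)
  refine key _ _ _ _ hxle hyle ?_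
  rcases hstrict with ⟨x, hxb, hxa, hx⟩ | ⟨y, hya, hyb, hy⟩
  · exact Or.inl (vals_lt φR hneutR hmonR Deg hpos _ _ hAtt x hxb hxa hx)
  · exact Or.inr (vals_lt φS hneutS hmonS Deg hpos _ _ hSupp y hya hyb hy)
end

section
/- Reinforcement (A8) for aggregative semantics: let (𝒜, ℛ, 𝒮, w) be a QBAF and Deg a function satisfying the aggregative recurrence for (φ_R, φ_S, φ_f). Assume φ_R and φ_S are nondecreasing (for every multiset M and reals u ≤ v, φ(M + ⟦u⟧) ≤ φ(M + ⟦v⟧)) and φ_f is nonincreasing in its first argument and nondecreasing in its second argument. Let a, b ∈ 𝒜, C, C' ⊆ 𝒜 and x, x', y, y' ∈ 𝒜 \ (C ∪ C') be such that w(a) = w(b), Att(a) = C ∪ {x}, Att(b) = C ∪ {y}, Supp(a) = C' ∪ {x'}, Supp(b) = C' ∪ {y'}, Deg(x) ≤ Deg(y) and Deg(x') ≥ Deg(y'). Then Deg(a) ≥ Deg(b). -/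
open scoped Classical

/-- Reinforcement (A8) for aggregative semantics. -/
theorem statement9 {α : Type*} [Fintype α]
    (R S : α → α → Prop) (w : α → ℝ)
    (hRS : ∀ u v : α, ¬ (R u v ∧ S u v))
    (hw : ∀ u : α, w u ∈ Set.Icc (0 : ℝ) 1)
    (φR φS : Multiset ℝ → ℝ) (φf : ℝ → ℝ → ℝ → ℝ)
    (Deg : α → ℝ)
    (hDeg : AggRec R S w φR φS φf Deg)
    (hmonR : ∀ (M : Multiset ℝ) (u v : ℝ), u ≤ v → φR (u ::ₘ M) ≤ φR (v ::ₘ M))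
    (hmonS : ∀ (M : Multiset ℝ) (u v : ℝ), u ≤ v → φS (u ::ₘ M) ≤ φS (v ::ₘ M))
    (hf1 : ∀ x x' y z : ℝ, x ≤ x' → φf x' y z ≤ φf x y z)
    (hf2 : ∀ x y y' z : ℝ, y ≤ y' → φf x y z ≤ φf x y' z)
    (a b : α) (C C' : Finset α) (x x' y y' : α)
    (hx : x ∉ C ∪ C') (hx' : x' ∉ C ∪ C') (hy : y ∉ C ∪ C') (hy' : y' ∉ C ∪ C')
    (hwab : w a = w b)
    (hAa : parentSet R a = insert x C) (hAb : parentSet R b = insert y C)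
    (hSa : parentSet S a = insert x' C') (hSb : parentSet S b = insert y' C')
    (hxy : Deg x ≤ Deg y) (hyx' : Deg y' ≤ Deg x') :
    Deg b ≤ Deg a := by
  simp only [Finset.mem_union] at hx hx' hy hy'
  have hxC : x ∉ C := fun h => hx (Or.inl h)
  have hyC : y ∉ C := fun h => hy (Or.inl h)
  have hx'C : x' ∉ C' := fun h => hx' (Or.inr h)
  have hy'C : y' ∉ C' := fun h => hy' (Or.inr h)
  have hvA : parentVals R Deg a = Deg x ::ₘ C.val.map Deg := by
    rw [parentVals, hAa, Finset.insert_val, Multiset.ndinsert_of_notMem hxC,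
      Multiset.map_cons]
  have hvB : parentVals R Deg b = Deg y ::ₘ C.val.map Deg := by
    rw [parentVals, hAb, Finset.insert_val, Multiset.ndinsert_of_notMem hyC,
      Multiset.map_cons]
  have hvA' : parentVals S Deg a = Deg x' ::ₘ C'.val.map Deg := by
    rw [parentVals, hSa, Finset.insert_val, Multiset.ndinsert_of_notMem hx'C,
      Multiset.map_cons]
  have hvB' : parentVals S Deg b = Deg y' ::ₘ C'.val.map Deg := by
    rw [parentVals, hSb, Finset.insert_val, Multiset.ndinsert_of_notMem hy'C,
      Multiset.map_cons]
  rw [hDeg a, hDeg b, hvA, hvB, hvA', hvB', hwab]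
  calc φf (φR (Deg y ::ₘ C.val.map Deg)) (φS (Deg y' ::ₘ C'.val.map Deg)) (w b)
      ≤ φf (φR (Deg x ::ₘ C.val.map Deg)) (φS (Deg y' ::ₘ C'.val.map Deg)) (w b) :=
        hf1 _ _ _ _ (hmonR _ _ _ hxy)
    _ ≤ φf (φR (Deg x ::ₘ C.val.map Deg)) (φS (Deg x' ::ₘ C'.val.map Deg)) (w b) :=
        hf2 _ _ _ _ (hmonS _ _ _ hyx')
end

section
/- Strict reinforcement for aggregative semantics: let (𝒜, ℛ, 𝒮, w) be a QBAF and Deg a function satisfying the aggregative recurrence for (φ_R, φ_S, φ_f). Assume φ_R and φ_S are strictly increasing (for every multiset M and reals u < v, φ(M + ⟦u⟧) < φ(M + ⟦v⟧)) and φ_f is strictly decreasing in its first argument and strictly increasing in its second argument. Let a, b ∈ 𝒜, C, C' ⊆ 𝒜 and x, x', y, y' ∈ 𝒜 \ (C ∪ C') be such that w(a) = w(b), Att(a) = C ∪ {x}, Att(b) = C ∪ {y}, Supp(a) = C' ∪ {x'}, Supp(b) = C' ∪ {y'}, Deg(x) ≤ Deg(y), Deg(x') ≥ Deg(y'), and moreover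 Deg(x) < Deg(y) or Deg(x') > Deg(y'). Then Deg(a) > Deg(b). -/
open scoped Classical

/-- Strict reinforcement for aggregative semantics. -/
theorem statement10 {α : Type*} [Fintype α]
    (R S : α → α → Prop) (w : α → ℝ)
    (hRS : ∀ u v : α, ¬ (R u v ∧ S u v))
    (hw : ∀ u : α, w u ∈ Set.Icc (0 : ℝ) 1)
    (φR φS : Multiset ℝ → ℝ) (φf : ℝ → ℝ → ℝ → ℝ)
    (Deg : α → ℝ)
    (hDeg : AggRec R S w φR φS φf Deg)
    (hmonR : ∀ (M : Multiset ℝ) (u v : ℝ), u < v → φR (u ::ₘ M) < φR (v ::ₘ M))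
    (hmonS : ∀ (M : Multiset ℝ) (u v : ℝ), u < v → φS (u ::ₘ M) < φS (v ::ₘ M))
    (hf1 : ∀ x x' y z : ℝ, x < x' → φf x' y z < φf x y z)
    (hf2 : ∀ x y y' z : ℝ, y < y' → φf x y z < φf x y' z)
    (a b : α) (C C' : Finset α) (x x' y y' : α)
    (hx : x ∉ C ∪ C') (hx' : x' ∉ C ∪ C') (hy : y ∉ C ∪ C') (hy' : y' ∉ C ∪ C')
    (hwab : w a = w b)
    (hAa : parentSet R a = insert x C) (hAb : parentSet R b = insert y C)
    (hSa : parentSet S a = insert x' C') (hSb : parentSet S b = insert y' C')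
    (hxy : Deg x ≤ Deg y) (hyx' : Deg y' ≤ Deg x')
    (hstrict : Deg x < Deg y ∨ Deg y' < Deg x') :
    Deg b < Deg a := by
  have hxC : x ∉ C := fun h => hx (Finset.mem_union_left _ h)
  have hyC : y ∉ C := fun h => hy (Finset.mem_union_left _ h)
  have hx'C : x' ∉ C' := fun h => hx' (Finset.mem_union_right _ h)
  have hy'C : y' ∉ C' := fun h => hy' (Finset.mem_union_right _ h)
  have ea : parentVals R Deg a = Deg x ::ₘ C.val.map Deg := by
    rw [parentVals, hAa, Finset.insert_val_of_notMem hxC, Multiset.map_cons]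
  have eb : parentVals R Deg b = Deg y ::ₘ C.val.map Deg := by
    rw [parentVals, hAb, Finset.insert_val_of_notMem hyC, Multiset.map_cons]
  have ea' : parentVals S Deg a = Deg x' ::ₘ C'.val.map Deg := by
    rw [parentVals, hSa, Finset.insert_val_of_notMem hx'C, Multiset.map_cons]
  have eb' : parentVals S Deg b = Deg y' ::ₘ C'.val.map Deg := by
    rw [parentVals, hSb, Finset.insert_val_of_notMem hy'C, Multiset.map_cons]
  have hRle : φR (parentVals R Deg a) ≤ φR (parentVals R Deg b) := by
    rw [ea, eb]
    rcases lt_or_eq_of_le hxy with h | h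
    · exact (hmonR _ _ _ h).le
    · rw [h]
  have hSle : φS (parentVals S Deg b) ≤ φS (parentVals S Deg a) := by
    rw [ea', eb']
    rcases lt_or_eq_of_le hyx' with h | h
    · exact (hmonS _ _ _ h).le
    · rw [h]
  rw [hDeg a, hDeg b, ← hwab]
  rcases hstrict with h | h
  · have hR : φR (parentVals R Deg a) < φR (parentVals R Deg b) := by
      rw [ea, eb]; exact hmonR _ _ _ h
    calc φf (φR (parentVals R Deg b)) (φS (parentVals S Deg b)) (w a)
        < φf (φR (parentVals R Deg a)) (φS (parentVals S Deg b)) (w a) :=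
          hf1 _ _ _ _ hR
      _ ≤ φf (φR (parentVals R Deg a)) (φS (parentVals S Deg a)) (w a) := by
          rcases lt_or_eq_of_le hSle with h2 | h2
          · exact (hf2 _ _ _ _ h2).le
          · rw [h2]
  · have hS : φS (parentVals S Deg b) < φS (parentVals S Deg a) := by
      rw [ea', eb']; exact hmonS _ _ _ h
    calc φf (φR (parentVals R Deg b)) (φS (parentVals S Deg b)) (w a)
        < φf (φR (parentVals R Deg b)) (φS (parentVals S Deg a)) (w a) :=
          hf2 _ _ _ _ hS
      _ ≤ φf (φR (parentVals R Deg a)) (φS (parentVals S Deg a)) (w a) := by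
          rcases lt_or_eq_of_le hRle with h2 | h2
          · exact (hf1 _ _ _ _ h2).le
          · rw [h2]
end

section
/- The symmetrical sum σ(x, y) = x·y / (1 − x − y + 2·x·y) is a well-defined associative operation on the open unit interval: for all x, y, z ∈ (0,1), the denominator 1 − x − y + 2·x·y is strictly positive, σ(x, y) ∈ (0,1), and σ(σ(x, y), z) = σ(x, σ(y, z)). -/
/-- The symmetrical sum `σ(x, y) = x·y / (1 − x − y + 2·x·y)`. -/
noncomputable def symSum (x y : ℝ) : ℝ := x * y / (1 - x - y + 2 * x * y)

/-! Writing the denominator as `(1 - x)(1 - y) + xy` shows that `σ(x, y) : 1 - σ(x, y)` is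
`xy : (1 - x)(1 - y)`, so iterating gives the symmetric expression
`σ(σ(x, y), z) = xyz / ((1 - x)(1 - y)(1 - z) + xyz)`; associativity then follows from
commutativity. -/

theorem symSum_denom_eq (x y : ℝ) : 1 - x - y + 2 * x * y = (1 - x) * (1 - y) + x * y := by
  ring

theorem symSum_denom_pos {x y : ℝ} (hx : x ∈ Set.Ioo (0 : ℝ) 1) (hy : y ∈ Set.Ioo (0 : ℝ) 1) :
    0 < 1 - x - y + 2 * x * y := by
  rw [symSum_denom_eq]
  exact add_pos (mul_pos (sub_pos.2 hx.2) (sub_pos.2 hy.2)) (mul_pos hx.1 hy.1)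

theorem symSum_comm (x y : ℝ) : symSum x y = symSum y x := by
  unfold symSum
  ring_nf

theorem one_sub_symSum {x y : ℝ} (hxy : 1 - x - y + 2 * x * y ≠ 0) :
    1 - symSum x y = (1 - x) * (1 - y) / (1 - x - y + 2 * x * y) := by
  rw [symSum, eq_div_iff hxy, sub_mul, div_mul_cancel₀ _ hxy]
  ring

theorem symSum_mem_Ioo {x y : ℝ} (hx : x ∈ Set.Ioo (0 : ℝ) 1) (hy : y ∈ Set.Ioo (0 : ℝ) 1) :
    symSum x y ∈ Set.Ioo (0 : ℝ) 1 := by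
  have hd := symSum_denom_pos hx hy
  refine ⟨div_pos (mul_pos hx.1 hy.1) hd, sub_pos.1 ?_⟩
  rw [one_sub_symSum hd.ne']
  exact div_pos (mul_pos (sub_pos.2 hx.2) (sub_pos.2 hy.2)) hd

theorem symSum_symSum {x y : ℝ} (hxy : 1 - x - y + 2 * x * y ≠ 0) (z : ℝ) :
    symSum (symSum x y) z = x * y * z / ((1 - x) * (1 - y) * (1 - z) + x * y * z) := by
  have hd : (1 - symSum x y) * (1 - z) + symSum x y * z =
      ((1 - x) * (1 - y) * (1 - z) + x * y * z) / (1 - x - y + 2 * x * y) := by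
    rw [one_sub_symSum hxy, symSum]
    ring
  rw [symSum, symSum_denom_eq, hd, symSum, div_mul_eq_mul_div, div_div_div_cancel_right₀ hxy]

theorem symSum_assoc {x y z : ℝ} (hxy : 1 - x - y + 2 * x * y ≠ 0)
    (hyz : 1 - y - z + 2 * y * z ≠ 0) :
    symSum (symSum x y) z = symSum x (symSum y z) := by
  have hzy : 1 - z - y + 2 * z * y ≠ 0 := by
    rwa [symSum_denom_eq, mul_comm z, mul_comm (1 - z), ← symSum_denom_eq]
  rw [symSum_comm x (symSum y z), symSum_comm y z, symSum_symSum hxy, symSum_symSum hzy]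
  ring

/-- the symmetrical sum is a well-defined associative operation on
the open unit interval. -/
theorem statement15 :
    ∀ x ∈ Set.Ioo (0 : ℝ) 1, ∀ y ∈ Set.Ioo (0 : ℝ) 1, ∀ z ∈ Set.Ioo (0 : ℝ) 1,
      0 < 1 - x - y + 2 * x * y ∧ symSum x y ∈ Set.Ioo (0 : ℝ) 1 ∧
      symSum (symSum x y) z = symSum x (symSum y z) := by
  intro x hx y hy z hz
  exact ⟨symSum_denom_pos hx hy, symSum_mem_Ioo hx hy,
    symSum_assoc (symSum_denom_pos hx hy).ne' (symSum_denom_pos hy hz).ne'⟩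
end

section
/- The symmetrical sum σ(x, y) = x·y / (1 − x − y + 2·x·y) satisfies the weakening postulate below 1/2: for all x, y ∈ (0,1) with x < 1/2 and y < 1/2, σ(x, y) ≤ min(x, y). -/
/-- the symmetrical sum satisfies the weakening postulate below `1/2`. -/
theorem statement16 :
    ∀ x ∈ Set.Ioo (0 : ℝ) 1, ∀ y ∈ Set.Ioo (0 : ℝ) 1,
      x < 1 / 2 → y < 1 / 2 → symSum x y ≤ min x y := by
  rintro x ⟨hx0, hx1⟩ y ⟨hy0, hy1⟩ hx hy
  have hd : 0 < 1 - x - y + 2 * x * y := by nlinarith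
  rw [le_min_iff]
  constructor <;> rw [symSum, div_le_iff₀ hd] <;>
    nlinarith [mul_nonneg (mul_nonneg hx0.le (by linarith : (0:ℝ) ≤ 1 - x)) (by linarith : (0:ℝ) ≤ 1 - 2*y),
      mul_nonneg (mul_nonneg hy0.le (by linarith : (0:ℝ) ≤ 1 - y)) (by linarith : (0:ℝ) ≤ 1 - 2*x)]
end

section
/- The symmetrical sum σ(x, y) = x·y / (1 − x − y + 2·x·y) satisfies the reinforcement postulate above 1/2: for all x, y ∈ (0,1) with x > 1/2 and y > 1/2, σ(x, y) ≥ max(x, y). -/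
/-- the symmetrical sum satisfies the reinforcement postulate above `1/2`. -/
theorem statement17 :
    ∀ x ∈ Set.Ioo (0 : ℝ) 1, ∀ y ∈ Set.Ioo (0 : ℝ) 1,
      1 / 2 < x → 1 / 2 < y → max x y ≤ symSum x y := by
  rintro x ⟨hx0, hx1⟩ y ⟨hy0, hy1⟩ hx hy
  have hD : 0 < 1 - x - y + 2 * x * y := by nlinarith
  rw [symSum, max_le_iff]
  constructor <;> rw [le_div_iff₀ hD] <;> nlinarith [mul_pos hx0 (mul_pos (sub_pos.2 hx1) (by linarith : (0:ℝ) < 2 * y - 1)), mul_pos hy0 (mul_pos (sub_pos.2 hy1) (by linarith : (0:ℝ) < 2 * x - 1))]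
end

section
/- Incompatibility of a neutral element 0, continuity at 0, and weakening: let φ be a function from finite multisets of elements of [0,1] to [0,1] such that (i) 0 is a neutral element of φ, i.e. φ(M + ⟦0⟧) = φ(M) for every finite multiset M; (ii) φ is continuous at 0 in an added argument, i.e. for every finite multiset M, φ(M + ⟦ε⟧) tends to φ(M + ⟦0⟧) as ε tends to 0 from the right; and (iii) φ satisfies the weakening postulate, i.e. for every nonempty finite multiset M, φ(M) is at most the minimum of the elements of M. Then φ(M) = 0 for every nonempty finite multiset M of elements of [0,1]. -/
/-- incompatibility of a neutral element `0`, continuity at `0`,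
and the weakening postulate, for an aggregation function on finite multisets of
elements of `[0,1]` with values in `[0,1]`. -/
theorem statement19 (φ : Multiset ℝ → ℝ)
    (hrange : ∀ M : Multiset ℝ, (∀ u ∈ M, u ∈ Set.Icc (0 : ℝ) 1) →
      φ M ∈ Set.Icc (0 : ℝ) 1)
    (hneut : ∀ M : Multiset ℝ, (∀ u ∈ M, u ∈ Set.Icc (0 : ℝ) 1) →
      φ (0 ::ₘ M) = φ M)
    (hcont : ∀ M : Multiset ℝ, (∀ u ∈ M, u ∈ Set.Icc (0 : ℝ) 1) →
      Filter.Tendsto (fun ε : ℝ => φ (ε ::ₘ M)) (nhdsWithin 0 (Set.Ioi 0))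
        (nhds (φ (0 ::ₘ M))))
    (hweak : ∀ M : Multiset ℝ, M ≠ 0 → (∀ u ∈ M, u ∈ Set.Icc (0 : ℝ) 1) →
      ∀ u ∈ M, φ M ≤ u) :
    ∀ M : Multiset ℝ, M ≠ 0 → (∀ u ∈ M, u ∈ Set.Icc (0 : ℝ) 1) → φ M = 0 := by
  intro M hM hMmem
  have h0 : (0 : ℝ) ≤ φ M := (hrange M hMmem).1
  have hle : φ (0 ::ₘ M) ≤ 0 := by
    have hid : Filter.Tendsto (fun ε : ℝ => ε) (nhdsWithin 0 (Set.Ioi 0)) (nhds 0) :=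
      Filter.Tendsto.mono_left Filter.tendsto_id nhdsWithin_le_nhds
    refine le_of_tendsto_of_tendsto (hcont M hMmem) hid ?_
    have hev : ∀ᶠ ε : ℝ in nhdsWithin 0 (Set.Ioi 0), ε ∈ Set.Ioo (0:ℝ) 1 := by
      have : Set.Ioo (0:ℝ) 1 ∈ nhdsWithin 0 (Set.Ioi 0) := by
        refine mem_nhdsWithin.2 ⟨Set.Iio 1, isOpen_Iio, by norm_num, ?_⟩
        rintro x ⟨hx1, hx0⟩
        exact ⟨hx0, hx1⟩
      exact this
    filter_upwards [hev] with ε hε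
    have hεmem : ∀ u ∈ (ε ::ₘ M), u ∈ Set.Icc (0:ℝ) 1 := by
      intro u hu
      rcases Multiset.mem_cons.1 hu with rfl | hu
      · exact ⟨le_of_lt hε.1, le_of_lt hε.2⟩
      · exact hMmem u hu
    exact hweak (ε ::ₘ M) (Multiset.cons_ne_zero) hεmem ε (Multiset.mem_cons_self _ _)
  rw [hneut M hMmem] at hle
  linarith
end
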